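/- arXiv:0808.1821 — 3 statements merged into one kernel-verified Lean document; each statement's English description precedes it below -/
import Mathlib

section
/- Let Φ=(f_1,…,f_n) be a polynomial automorphism of K^n, let deg_1 be a p.w.h. degree on K[x_1,…,x_n], and let I be the ideal of relations of Φ. Then there exists a nonzero locally nilpotent K-derivation ∂ of K[x_1,…,x_n] such that ∂(I) ⊆ I. Moreover, if I is principal, say I = (R), then ∂(R) = 0. -/
/-!
Let `φ` be the automorphism `xⱼ ↦ fⱼ`, `φ̄` the endomorphism `xⱼ ↦ f̄ⱼ` (so that `I = ker φ̄`), and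
`deg₂` the weighted degree giving `xⱼ` the weight `deg₁ fⱼ`. Then `deg₁ (φ P) ≤ deg₂ P`, and the
part of `φ P` of `deg₁`-degree `deg₂ P` is `φ̄` of the leading `deg₂`-form of `P`.

If `I = 0`, a partial derivative works; in one variable `I` is always `0`. Otherwise `n ≥ 2` and
there are `i` and `q ≠ 0` with `∂ᵢ q = 0` and `deg₁ q < deg₂ (φ⁻¹ q)`: if not, every `xⱼ`, being
killed by some `∂ᵢ`, is `φ̄` of the leading form of `φ⁻¹ xⱼ`, so `φ̄` is surjective, hence injective
because the polynomial ring is noetherian.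

The conjugate `δ = φ⁻¹ ∘ qᴺ ∂ᵢ ∘ φ` is locally nilpotent, and so is its top `deg₂`-homogeneous
component `D`, of degree `E` say. For `N` large, `E > deg₁ qᴺ`, hence for homogeneous `P`
`deg₁ (φ (δ P)) = deg₁ (qᴺ ∂ᵢ (φ P)) ≤ deg₁ qᴺ + deg₂ P < deg₂ P + E`. As `D P` is the part of
`δ P` of `deg₂`-degree `deg₂ P + E`, this says `φ̄ (D P) = 0`. So `D` maps the whole ring into `I`,
and if `I = (R)` then `R ∣ D R`, which forces `D R = 0` for a locally nilpotent derivation of a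
domain of characteristic zero.
-/

open MvPolynomial

/-- Leading term of a polynomial with respect to the weighted homogeneous degree
with weights `w`. -/
noncomputable def ldt {K : Type*} [CommSemiring K] {n : ℕ} (w : Fin n → ℕ)
    (p : MvPolynomial (Fin n) K) : MvPolynomial (Fin n) K :=
  weightedHomogeneousComponent w (weightedTotalDegree w p) p

/-- The ideal of relations between the leading terms of the components of an
automorphism, with respect to the weighted degree with weights `w`. -/
noncomputable def relIdeal {K : Type*} [CommRing K] {n : ℕ} (w : Fin n → ℕ)
    (f : Fin n → MvPolynomial (Fin n) K) : Ideal (MvPolynomial (Fin n) K) :=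
  RingHom.ker
    (aeval (fun i => ldt w (f i)) : MvPolynomial (Fin n) K →ₐ[K] MvPolynomial (Fin n) K)

/-- A derivation is locally nilpotent if every element is killed by some iterate. -/
def IsLND {K A : Type*} [CommSemiring K] [CommRing A] [Algebra K A]
    (D : Derivation K A A) : Prop :=
  ∀ a : A, ∃ k : ℕ, (⇑D)^[k] a = 0

namespace MvPolynomial

section WeightedDegree

variable {R σ : Type*} [CommSemiring R] {w : σ → ℕ} {p q : MvPolynomial σ R} {a b : ℕ}

theorem weightedTotalDegree_le_iff_mem_restrictSupport :
    weightedTotalDegree w p ≤ a ↔ p ∈ restrictSupport R {α | Finsupp.weight w α ≤ a} := by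
  rw [mem_restrictSupport_iff]
  exact Finset.sup_le_iff

theorem weightedTotalDegree_sum_le {ι : Type*} {s : Finset ι} {p : ι → MvPolynomial σ R}
    (h : ∀ i ∈ s, weightedTotalDegree w (p i) ≤ a) :
    weightedTotalDegree w (∑ i ∈ s, p i) ≤ a := by
  simp_rw [weightedTotalDegree_le_iff_mem_restrictSupport] at h ⊢
  exact Submodule.sum_mem _ h

theorem weightedTotalDegree_add_le (hp : weightedTotalDegree w p ≤ a)
    (hq : weightedTotalDegree w q ≤ a) : weightedTotalDegree w (p + q) ≤ a := by
  rw [weightedTotalDegree_le_iff_mem_restrictSupport] at hp hq ⊢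
  exact add_mem hp hq

theorem IsWeightedHomogeneous.weightedTotalDegree_le (hp : IsWeightedHomogeneous w p a) :
    weightedTotalDegree w p ≤ a :=
  Finset.sup_le fun _ hα => (hp (mem_support_iff.mp hα)).le

theorem IsWeightedHomogeneous.weightedTotalDegree_eq (hp : IsWeightedHomogeneous w p a)
    (h : p ≠ 0) : weightedTotalDegree w p = a := by
  have := hp.weighted_total_degree h
  rwa [weightedTotalDegree_coe _ _ h, WithBot.coe_inj] at this

theorem weightedHomogeneousComponent_weightedTotalDegree_ne_zero (hp : p ≠ 0) :
    weightedHomogeneousComponent w (weightedTotalDegree w p) p ≠ 0 := by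
  classical
  obtain ⟨α, hα, hmax⟩ :=
    Finset.exists_mem_eq_sup p.support (support_nonempty.mpr hp) (Finsupp.weight w)
  refine ne_zero_iff.mpr ⟨α, ?_⟩
  rwa [coeff_weightedHomogeneousComponent, if_pos (show _ = weightedTotalDegree w p from hmax.symm),
    ← mem_support_iff]

theorem sum_weightedHomogeneousComponent_range (hp : weightedTotalDegree w p ≤ a) :
    ∑ m ∈ Finset.range (a + 1), weightedHomogeneousComponent w m p = p := by
  classical
  ext α
  simp only [coeff_sum, coeff_weightedHomogeneousComponent, Finset.sum_ite_eq,
    Finset.mem_range, Nat.lt_succ_iff]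
  split_ifs with h
  · rfl
  · by_contra hα
    exact h ((le_weightedTotalDegree w (mem_support_iff.mpr (Ne.symm hα))).trans hp)

theorem IsWeightedHomogeneous.weightedHomogeneousComponent_mul_left
    (hp : IsWeightedHomogeneous w p a) (b : ℕ) :
    weightedHomogeneousComponent w (a + b) (p * q) = p * weightedHomogeneousComponent w b q := by
  classical
  ext γ
  simp only [coeff_weightedHomogeneousComponent, coeff_mul]
  rw [Finset.ite_sum_zero]
  refine Finset.sum_congr rfl fun x hx => ?_
  rw [Finset.HasAntidiagonal.mem_antidiagonal] at hx
  by_cases hx₁ : coeff x.1 p = 0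
  · simp [hx₁]
  · have hγ : Finsupp.weight w γ = a + Finsupp.weight w x.2 := by rw [← hx, map_add, hp hx₁]
    simp only [hγ, Nat.add_left_cancel_iff, mul_ite, mul_zero]

theorem le_weightedTotalDegree_of_weightedHomogeneousComponent_ne_zero
    (h : weightedHomogeneousComponent w a p ≠ 0) : a ≤ weightedTotalDegree w p :=
  not_lt.mp fun ha => h (weightedHomogeneousComponent_eq_zero _ _ ha)

theorem weightedTotalDegree_mul_le :
    weightedTotalDegree w (p * q) ≤ weightedTotalDegree w p + weightedTotalDegree w q := by
  classical
  refine Finset.sup_le fun γ hγ => ?_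
  obtain ⟨α, hα, β, hβ, rfl⟩ := Finset.mem_add.mp (support_mul p q hγ)
  rw [map_add]
  exact add_le_add (le_weightedTotalDegree w hα) (le_weightedTotalDegree w hβ)

theorem weightedHomogeneousComponent_mul_of_le (hp : weightedTotalDegree w p ≤ a)
    (hq : weightedTotalDegree w q ≤ b) :
    weightedHomogeneousComponent w (a + b) (p * q) =
      weightedHomogeneousComponent w a p * weightedHomogeneousComponent w b q := by
  classical
  ext γ
  simp only [coeff_weightedHomogeneousComponent, coeff_mul]
  rw [Finset.ite_sum_zero]
  refine Finset.sum_congr rfl fun x hx => ?_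
  rw [Finset.HasAntidiagonal.mem_antidiagonal] at hx
  by_cases h₁ : coeff x.1 p = 0
  · simp [h₁]
  by_cases h₂ : coeff x.2 q = 0
  · simp [h₂]
  have hx₁ := (le_weightedTotalDegree w (mem_support_iff.mpr h₁)).trans hp
  have hx₂ := (le_weightedTotalDegree w (mem_support_iff.mpr h₂)).trans hq
  have hγ : Finsupp.weight w γ = Finsupp.weight w x.1 + Finsupp.weight w x.2 := by
    rw [← hx, map_add]
  split_ifs <;> first | rfl | (exfalso; omega) | simp

theorem weightedTotalDegree_prod_le {ι : Type*} {s : Finset ι} {p : ι → MvPolynomial σ R}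
    {a : ι → ℕ} (h : ∀ i ∈ s, weightedTotalDegree w (p i) ≤ a i) :
    weightedTotalDegree w (∏ i ∈ s, p i) ≤ ∑ i ∈ s, a i := by
  classical
  induction s using Finset.induction with
  | empty => exact (isWeightedHomogeneous_one R w).weightedTotalDegree_le
  | insert i s hi ih =>
    rw [Finset.prod_insert hi, Finset.sum_insert hi]
    exact weightedTotalDegree_mul_le.trans <| add_le_add (h i (s.mem_insert_self i))
      (ih fun j hj => h j (Finset.mem_insert_of_mem hj))

theorem weightedHomogeneousComponent_prod_of_le {ι : Type*} {s : Finset ι}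
    {p : ι → MvPolynomial σ R} {a : ι → ℕ} (h : ∀ i ∈ s, weightedTotalDegree w (p i) ≤ a i) :
    weightedHomogeneousComponent w (∑ i ∈ s, a i) (∏ i ∈ s, p i) =
      ∏ i ∈ s, weightedHomogeneousComponent w (a i) (p i) := by
  classical
  induction s using Finset.induction with
  | empty => exact weightedHomogeneousComponent_eq_self (isWeightedHomogeneous_one R w)
  | insert i s hi ih =>
    have hs : ∀ j ∈ s, weightedTotalDegree w (p j) ≤ a j := fun j hj =>
      h j (Finset.mem_insert_of_mem hj)
    rw [Finset.prod_insert hi, Finset.sum_insert hi, Finset.prod_insert hi,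
      weightedHomogeneousComponent_mul_of_le (h i (s.mem_insert_self i))
        (weightedTotalDegree_prod_le hs), ih hs]

theorem weightedTotalDegree_pow_le (hp : weightedTotalDegree w p ≤ a) (k : ℕ) :
    weightedTotalDegree w (p ^ k) ≤ k * a := by
  simpa using weightedTotalDegree_prod_le (s := Finset.range k) fun _ _ => hp

theorem weightedHomogeneousComponent_pow_of_le (hp : weightedTotalDegree w p ≤ a) (k : ℕ) :
    weightedHomogeneousComponent w (k * a) (p ^ k) = weightedHomogeneousComponent w a p ^ k := by
  simpa using weightedHomogeneousComponent_prod_of_le (s := Finset.range k) fun _ _ => hp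

theorem weightedTotalDegree_pderiv_add_le {i : σ} (h : pderiv i p ≠ 0) :
    weightedTotalDegree w (pderiv i p) + w i ≤ weightedTotalDegree w p := by
  obtain ⟨α, hα, hmax⟩ := Finset.exists_mem_eq_sup _ (support_nonempty.mpr h) (Finsupp.weight w)
  have hcoeff : coeff (α + Finsupp.single i 1) p ≠ 0 := by
    have := mem_support_iff.mp hα
    rw [coeff_pderiv] at this
    exact left_ne_zero_of_mul this
  have := le_weightedTotalDegree w (mem_support_iff.mpr hcoeff)
  rwa [map_add, Finsupp.weight_single, one_smul, ← hmax] at this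

theorem weightedTotalDegree_pderiv_le (i : σ) :
    weightedTotalDegree w (pderiv i p) ≤ weightedTotalDegree w p := by
  by_cases h : pderiv i p = 0
  · rw [h, weightedTotalDegree_zero]
    exact Nat.zero_le _
  · exact le_of_add_le_left (weightedTotalDegree_pderiv_add_le h)

section NoZeroDivisors

variable [NoZeroDivisors R]

theorem weightedTotalDegree_mul (hp : p ≠ 0) (hq : q ≠ 0) :
    weightedTotalDegree w (p * q) = weightedTotalDegree w p + weightedTotalDegree w q := by
  refine weightedTotalDegree_mul_le.antisymm <|
    le_weightedTotalDegree_of_weightedHomogeneousComponent_ne_zero ?_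
  rw [weightedHomogeneousComponent_mul_of_le le_rfl le_rfl]
  exact mul_ne_zero (weightedHomogeneousComponent_weightedTotalDegree_ne_zero hp)
    (weightedHomogeneousComponent_weightedTotalDegree_ne_zero hq)

theorem weightedTotalDegree_pow (hp : p ≠ 0) (k : ℕ) :
    weightedTotalDegree w (p ^ k) = k * weightedTotalDegree w p := by
  refine (weightedTotalDegree_pow_le le_rfl k).antisymm <|
    le_weightedTotalDegree_of_weightedHomogeneousComponent_ne_zero ?_
  rw [weightedHomogeneousComponent_pow_of_le le_rfl]
  exact pow_ne_zero k (weightedHomogeneousComponent_weightedTotalDegree_ne_zero hp)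

end NoZeroDivisors

end WeightedDegree

section Aeval

variable {R σ τ : Type*} [CommSemiring R] {w : τ → ℕ} {d : σ → ℕ} {f : σ → MvPolynomial τ R}
  {P : MvPolynomial σ R} {a : ℕ}

theorem weightedTotalDegree_C_mul_le (r : R) (p : MvPolynomial τ R) :
    weightedTotalDegree w (C r * p) ≤ weightedTotalDegree w p := by
  calc weightedTotalDegree w (C r * p) ≤ weightedTotalDegree w (C r) + weightedTotalDegree w p :=
        weightedTotalDegree_mul_le
    _ ≤ 0 + weightedTotalDegree w p :=
        add_le_add_left (isWeightedHomogeneous_C w r).weightedTotalDegree_le _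
    _ = weightedTotalDegree w p := zero_add _

theorem aeval_monomial_eq_C_mul_prod (α : σ →₀ ℕ) (r : R) :
    aeval f (monomial α r) = C r * ∏ j ∈ α.support, f j ^ α j :=
  aeval_monomial ..

theorem weight_eq_sum_support (α : σ →₀ ℕ) :
    Finsupp.weight d α = ∑ j ∈ α.support, α j * d j :=
  rfl

variable (hf : ∀ j, weightedTotalDegree w (f j) ≤ d j)
include hf

theorem IsWeightedHomogeneous.weightedTotalDegree_aeval_le (hP : IsWeightedHomogeneous d P a) :
    weightedTotalDegree w (aeval f P) ≤ a := by
  induction hP using IsWeightedHomogeneous.induction_on with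
  | zero => rw [map_zero, weightedTotalDegree_zero]; exact Nat.zero_le a
  | add p q _ _ hp hq => rw [map_add]; exact weightedTotalDegree_add_le hp hq
  | monomial α r hα =>
    rw [aeval_monomial_eq_C_mul_prod, ← hα, weight_eq_sum_support]
    exact (weightedTotalDegree_C_mul_le _ _).trans <|
      weightedTotalDegree_prod_le fun j _ => weightedTotalDegree_pow_le (hf j) _

theorem IsWeightedHomogeneous.weightedHomogeneousComponent_aeval
    (hP : IsWeightedHomogeneous d P a) :
    weightedHomogeneousComponent w a (aeval f P) =
      aeval (fun j => weightedHomogeneousComponent w (d j) (f j)) P := by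
  induction hP using IsWeightedHomogeneous.induction_on with
  | zero => simp
  | add p q _ _ hp hq => rw [map_add, map_add, map_add, hp, hq]
  | monomial α r hα =>
    rw [aeval_monomial_eq_C_mul_prod, aeval_monomial_eq_C_mul_prod, ← hα, weight_eq_sum_support,
      weightedHomogeneousComponent_C_mul,
      weightedHomogeneousComponent_prod_of_le fun j _ => weightedTotalDegree_pow_le (hf j) _]
    simp_rw [weightedHomogeneousComponent_pow_of_le (hf _)]

theorem weightedTotalDegree_aeval_le :
    weightedTotalDegree w (aeval f P) ≤ weightedTotalDegree d P := by
  conv_lhs => rw [← sum_weightedHomogeneousComponent_range (w := d) (p := P) le_rfl, map_sum]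
  refine weightedTotalDegree_sum_le fun m hm => ?_
  exact ((weightedHomogeneousComponent_isWeightedHomogeneous m P).weightedTotalDegree_aeval_le
    hf).trans (Nat.lt_succ_iff.mp (Finset.mem_range.mp hm))

theorem weightedHomogeneousComponent_aeval (hP : weightedTotalDegree d P ≤ a) :
    weightedHomogeneousComponent w a (aeval f P) =
      aeval (fun j => weightedHomogeneousComponent w (d j) (f j))
        (weightedHomogeneousComponent d a P) := by
  conv_lhs => rw [← sum_weightedHomogeneousComponent_range hP]
  rw [map_sum, map_sum, Finset.sum_range_succ,
    Finset.sum_eq_zero, zero_add,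
    (weightedHomogeneousComponent_isWeightedHomogeneous a P).weightedHomogeneousComponent_aeval hf]
  intro m hm
  exact weightedHomogeneousComponent_eq_zero _ _ <|
    ((weightedHomogeneousComponent_isWeightedHomogeneous m P).weightedTotalDegree_aeval_le
      hf).trans_lt (Finset.mem_range.mp hm)

end Aeval

end MvPolynomial

namespace Derivation

open Finset

variable {R A : Type*} [CommSemiring R] [CommRing A] [Algebra R A] (D : Derivation R A A)

theorem iterate_leibniz (n : ℕ) (a b : A) :
    D^[n] (a * b) = ∑ ij ∈ antidiagonal n, n.choose ij.1 • (D^[ij.1] a * D^[ij.2] b) := by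
  induction n with
  | zero => simp
  | succ n ih =>
    rw [sum_antidiagonal_choose_succ_nsmul (fun i j => D^[i] a * D^[j] b) n]
    simp only [Function.iterate_succ_apply', ih, map_sum, map_nsmul, leibniz, smul_eq_mul,
      nsmul_add, sum_add_distrib]
    congr 1
    refine sum_congr rfl fun ij hij => ?_
    rw [n.choose_symm_of_eq_add (HasAntidiagonal.mem_antidiagonal.1 hij).symm, mul_comm]

theorem iterate_eq_zero_of_le {a : A} {k m : ℕ} (h : D^[k] a = 0) (hkm : k ≤ m) :
    D^[m] a = 0 := by
  rw [← Nat.sub_add_cancel hkm, Function.iterate_add_apply, h, iterate_map_zero]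

theorem iterate_add_mul {a b : A} {p q : ℕ} (ha : D^[p + 1] a = 0) (hb : D^[q + 1] b = 0) :
    D^[p + q] (a * b) = (p + q).choose p • (D^[p] a * D^[q] b) := by
  rw [iterate_leibniz, sum_eq_single_of_mem (p, q) (mem_antidiagonal.2 rfl)]
  rintro ⟨i, j⟩ hij hne
  rw [HasAntidiagonal.mem_antidiagonal] at hij
  rcases Nat.lt_or_ge p i with hi | hi
  · rw [D.iterate_eq_zero_of_le ha hi, zero_mul, smul_zero]
  · rw [D.iterate_eq_zero_of_le hb (by grind), mul_zero, smul_zero]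

theorem exists_iterate_sum_eq_zero {ι : Type*} (s : Finset ι) (x : ι → A)
    (h : ∀ i ∈ s, ∃ k, D^[k] (x i) = 0) : ∃ k, D^[k] (∑ i ∈ s, x i) = 0 := by
  classical
  induction s using Finset.induction with
  | empty => exact ⟨0, rfl⟩
  | insert i s hi ih =>
    obtain ⟨k, hk⟩ := h i (mem_insert_self i s)
    obtain ⟨l, hl⟩ := ih fun j hj => h j (mem_insert_of_mem hj)
    refine ⟨max k l, ?_⟩
    rw [sum_insert hi, iterate_map_add, D.iterate_eq_zero_of_le hk (le_max_left k l),
      D.iterate_eq_zero_of_le hl (le_max_right k l), add_zero]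

theorem iterate_smul_of_apply_eq_zero {g : A} (hg : D g = 0) (k : ℕ) (a : A) :
    (g • D)^[k] a = g ^ k * D^[k] a := by
  induction k with
  | zero => simp
  | succ k ih =>
    rw [Function.iterate_succ_apply', ih, Function.iterate_succ_apply', smul_apply, leibniz,
      leibniz_pow, hg]
    simp only [smul_eq_mul]
    ring

def conj (e : A ≃ₐ[R] A) : Derivation R A A :=
  Derivation.mk' (e.symm.toLinearMap ∘ₗ D.toLinearMap ∘ₗ e.toLinearMap) fun a b => by
    simp [leibniz, smul_eq_mul]

theorem conj_apply (e : A ≃ₐ[R] A) (a : A) : D.conj e a = e.symm (D (e a)) :=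
  rfl

theorem iterate_conj (e : A ≃ₐ[R] A) (k : ℕ) (a : A) :
    (D.conj e)^[k] a = e.symm (D^[k] (e a)) := by
  induction k with
  | zero => simp
  | succ k ih => rw [Function.iterate_succ_apply', ih, conj_apply, AlgEquiv.apply_symm_apply,
      Function.iterate_succ_apply']

end Derivation

section IsLND

variable {R A : Type*} [CommSemiring R] [CommRing A] [Algebra R A] {D : Derivation R A A}

theorem IsLND.exists_iterate_ne_zero (hD : IsLND D) {a : A} (ha : a ≠ 0) :
    ∃ p, D^[p] a ≠ 0 ∧ D^[p + 1] a = 0 := by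
  classical
  have hk : D^[Nat.find (hD a)] a = 0 := Nat.find_spec (hD a)
  obtain ⟨p, hp⟩ := Nat.exists_eq_add_one_of_ne_zero (n := Nat.find (hD a)) fun h0 =>
    ha (by rwa [h0] at hk)
  rw [hp] at hk
  exact ⟨p, Nat.find_min (hD a) (by omega), hk⟩

theorem IsLND.apply_eq_zero_of_dvd [IsDomain A] [CharZero A] (hD : IsLND D) {a : A}
    (hdvd : a ∣ D a) : D a = 0 := by
  obtain ⟨b, h⟩ := hdvd
  by_contra hne
  obtain ⟨p, hp, hp'⟩ := hD.exists_iterate_ne_zero (left_ne_zero_of_mul (h ▸ hne))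
  obtain ⟨q, hq, hq'⟩ := hD.exists_iterate_ne_zero (right_ne_zero_of_mul (h ▸ hne))
  have hpq : D^[p + q] (a * b) ≠ 0 := by
    rw [D.iterate_add_mul hp' hq', nsmul_eq_mul]
    exact mul_ne_zero (Nat.cast_ne_zero.mpr (Nat.choose_pos (Nat.le_add_right p q)).ne')
      (mul_ne_zero hp hq)
  apply hpq
  rw [← h, ← Function.iterate_succ_apply]
  exact D.iterate_eq_zero_of_le hp' (by omega)

theorem IsLND.smul_of_apply_eq_zero (hD : IsLND D) {g : A} (hg : D g = 0) : IsLND (g • D) :=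
  fun a => (hD a).imp fun k hk => by rw [D.iterate_smul_of_apply_eq_zero hg, hk, mul_zero]

theorem IsLND.conj (hD : IsLND D) (e : A ≃ₐ[R] A) : IsLND (D.conj e) :=
  fun a => (hD (e a)).imp fun k hk => by rw [D.iterate_conj, hk, map_zero]

end IsLND

namespace MvPolynomial

variable {R σ : Type*} [CommRing R] {d : σ → ℕ} {E a : ℕ}
  (δ : Derivation R (MvPolynomial σ R) (MvPolynomial σ R))

theorem isLND_pderiv (i : σ) :
    IsLND (pderiv i : Derivation R (MvPolynomial σ R) (MvPolynomial σ R)) := by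
  suffices h : ∀ m (q : MvPolynomial σ R), weightedTotalDegree 1 q < m → (pderiv i)^[m] q = 0 from
    fun q => ⟨_, h _ q (Nat.lt_succ_self _)⟩
  intro m
  induction m with
  | zero => exact fun q hq => absurd hq (Nat.not_lt_zero _)
  | succ m ih =>
    intro q hq
    rw [Function.iterate_succ_apply]
    by_cases h : pderiv i q = 0
    · rw [h, iterate_map_zero]
    · have := weightedTotalDegree_pderiv_add_le (w := 1) h
      exact ih _ (by simp only [Pi.one_apply] at this; omega)

theorem weight_tsub_single_add {α : σ →₀ ℕ} {j : σ} (h : α j ≠ 0) :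
    Finsupp.weight d (α - Finsupp.single j 1) + d j = Finsupp.weight d α := by
  have hle : Finsupp.single j 1 ≤ α := Finsupp.single_le_iff.mpr (Nat.one_le_iff_ne_zero.mpr h)
  conv_rhs => rw [← tsub_add_cancel_of_le hle]
  rw [map_add, Finsupp.weight_single, one_smul]

theorem derivation_monomial (α : σ →₀ ℕ) (r : R) :
    δ (monomial α r) =
      r • ∑ j ∈ α.support, monomial (α - Finsupp.single j 1) (α j : R) * δ (X j) := by
  conv_lhs => rw [show δ = mkDerivation R fun j => δ (X j) from
    derivation_ext fun j => (mkDerivation_X R (fun j => δ (X j)) j).symm]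
  rw [mkDerivation_monomial]
  rfl

/-- The homogeneous component of degree `E` of `δ` for the grading by the weights `d`. -/
noncomputable def derivationComponent (d : σ → ℕ) (E : ℕ) :
    Derivation R (MvPolynomial σ R) (MvPolynomial σ R) :=
  mkDerivation R fun j => weightedHomogeneousComponent d (d j + E) (δ (X j))

theorem IsWeightedHomogeneous.derivationComponent_apply {Q : MvPolynomial σ R}
    (hQ : IsWeightedHomogeneous d Q a) :
    derivationComponent δ d E Q = weightedHomogeneousComponent d (a + E) (δ Q) := by
  induction hQ using IsWeightedHomogeneous.induction_on with
  | zero => simp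
  | add p q _ _ hp hq => rw [map_add, map_add, map_add, hp, hq]
  | monomial α r hα =>
    rw [derivation_monomial, derivation_monomial, map_smul, map_sum]
    congr 1
    refine Finset.sum_congr rfl fun j hj => ?_
    rw [derivationComponent, mkDerivation_X, ← hα, ← weight_tsub_single_add
      (Finsupp.mem_support_iff.mp hj), add_assoc,
      (isWeightedHomogeneous_monomial _ _ _ rfl).weightedHomogeneousComponent_mul_left]

theorem exists_derivationComponent_ne_zero [Fintype σ] {B : ℕ} {j₀ : σ}
    (h : d j₀ + B < weightedTotalDegree d (δ (X j₀))) :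
    ∃ E, B < E ∧ (∀ j, weightedTotalDegree d (δ (X j)) ≤ d j + E) ∧
      derivationComponent δ d E ≠ 0 := by
  set E := Finset.univ.sup fun j => weightedTotalDegree d (δ (X j)) - d j
  have hle : ∀ j, weightedTotalDegree d (δ (X j)) - d j ≤ E := fun j =>
    Finset.le_sup (f := fun j => weightedTotalDegree d (δ (X j)) - d j) (Finset.mem_univ j)
  obtain ⟨j₁, -, hj₁⟩ := Finset.exists_mem_eq_sup Finset.univ ⟨j₀, Finset.mem_univ _⟩
    fun j => weightedTotalDegree d (δ (X j)) - d j
  replace hj₁ : E = weightedTotalDegree d (δ (X j₁)) - d j₁ := hj₁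
  clear_value E
  have hBE : B < E := by have := hle j₀; omega
  have hj₁E : weightedTotalDegree d (δ (X j₁)) = d j₁ + E := by omega
  refine ⟨E, hBE, fun j => by have := hle j; omega, fun hD => ?_⟩
  have hne : δ (X j₁) ≠ 0 := by
    intro h0
    rw [h0, weightedTotalDegree_zero, Nat.bot_eq_zero] at hj₁E
    omega
  apply weightedHomogeneousComponent_weightedTotalDegree_ne_zero hne
  rw [hj₁E, ← mkDerivation_X R (fun j => weightedHomogeneousComponent d (d j + E) (δ (X j))) j₁]
  exact congrArg (· (X j₁)) hD

variable {δ} (hδ : ∀ j, weightedTotalDegree d (δ (X j)) ≤ d j + E)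
include hδ

theorem IsWeightedHomogeneous.weightedTotalDegree_derivation_le {Q : MvPolynomial σ R}
    (hQ : IsWeightedHomogeneous d Q a) : weightedTotalDegree d (δ Q) ≤ a + E := by
  induction hQ using IsWeightedHomogeneous.induction_on with
  | zero => rw [map_zero, weightedTotalDegree_zero]; exact Nat.zero_le _
  | add p q _ _ hp hq => rw [map_add]; exact weightedTotalDegree_add_le hp hq
  | monomial α r hα =>
    rw [derivation_monomial, weightedTotalDegree_le_iff_mem_restrictSupport]
    refine Submodule.smul_mem _ _ (Submodule.sum_mem _ fun j hj => ?_)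
    rw [← weightedTotalDegree_le_iff_mem_restrictSupport, ← hα, ← weight_tsub_single_add
      (Finsupp.mem_support_iff.mp hj), add_assoc]
    exact weightedTotalDegree_mul_le.trans (add_le_add
      (isWeightedHomogeneous_monomial _ _ _ rfl).weightedTotalDegree_le (hδ j))

theorem weightedTotalDegree_derivation_le (P : MvPolynomial σ R) :
    weightedTotalDegree d (δ P) ≤ weightedTotalDegree d P + E := by
  conv_lhs => rw [← sum_weightedHomogeneousComponent_range (w := d) (p := P) le_rfl, map_sum]
  refine weightedTotalDegree_sum_le fun m hm => ?_
  exact ((weightedHomogeneousComponent_isWeightedHomogeneous m P).weightedTotalDegree_derivation_le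
    hδ).trans (by have := Finset.mem_range.mp hm; omega)

theorem derivationComponent_weightedHomogeneousComponent {P : MvPolynomial σ R}
    (hP : weightedTotalDegree d P ≤ a) :
    derivationComponent δ d E (weightedHomogeneousComponent d a P) =
      weightedHomogeneousComponent d (a + E) (δ P) := by
  conv_rhs => rw [← sum_weightedHomogeneousComponent_range hP]
  rw [map_sum, map_sum, Finset.sum_range_succ, Finset.sum_eq_zero, zero_add,
    (weightedHomogeneousComponent_isWeightedHomogeneous a P).derivationComponent_apply]
  intro m hm
  exact weightedHomogeneousComponent_eq_zero _ _ <|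
    ((weightedHomogeneousComponent_isWeightedHomogeneous m P).weightedTotalDegree_derivation_le
      hδ).trans_lt (by have := Finset.mem_range.mp hm; omega)

theorem weightedTotalDegree_iterate_derivation_le (P : MvPolynomial σ R) (k : ℕ) :
    weightedTotalDegree d (δ^[k] P) ≤ weightedTotalDegree d P + k * E := by
  induction k with
  | zero => simp
  | succ k ih =>
    rw [Function.iterate_succ_apply', Nat.succ_mul, ← add_assoc]
    exact (weightedTotalDegree_derivation_le hδ _).trans (Nat.add_le_add_right ih E)

theorem iterate_derivationComponent_weightedHomogeneousComponent {P : MvPolynomial σ R}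
    (hP : weightedTotalDegree d P ≤ a) (k : ℕ) :
    (derivationComponent δ d E)^[k] (weightedHomogeneousComponent d a P) =
      weightedHomogeneousComponent d (a + k * E) (δ^[k] P) := by
  induction k with
  | zero => simp
  | succ k ih =>
    have hk := (weightedTotalDegree_iterate_derivation_le hδ P k).trans (Nat.add_le_add_right hP _)
    rw [Function.iterate_succ_apply', ih, derivationComponent_weightedHomogeneousComponent hδ hk,
      Function.iterate_succ_apply', add_assoc, ← Nat.succ_mul]

theorem _root_.IsLND.derivationComponent (hl : IsLND δ) : IsLND (derivationComponent δ d E) := by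
  intro x
  rw [← sum_weightedHomogeneousComponent_range (w := d) (p := x) le_rfl]
  refine Derivation.exists_iterate_sum_eq_zero _ _ _ fun m _ => ?_
  obtain ⟨k, hk⟩ := hl (weightedHomogeneousComponent d m x)
  refine ⟨k, ?_⟩
  have hm := weightedHomogeneousComponent_isWeightedHomogeneous (w := d) m x
  rw [← weightedHomogeneousComponent_eq_self hm,
    iterate_derivationComponent_weightedHomogeneousComponent hδ hm.weightedTotalDegree_le, hk,
    map_zero]

end MvPolynomial

theorem RingHom.injective_of_surjective_of_isNoetherianRing {A : Type*} [CommRing A]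
    [IsNoetherianRing A] (π : A →+* A) (hπ : Function.Surjective π) : Function.Injective π := by
  obtain ⟨m, hm⟩ := WellFoundedGT.monotone_chain_condition (α := Ideal A)
    ⟨fun k => RingHom.ker (π ^ k), monotone_nat_of_le_succ fun k x hx => by
      rw [RingHom.mem_ker, RingHom.coe_pow, Function.iterate_succ_apply', ← RingHom.coe_pow,
        RingHom.mem_ker.mp hx, map_zero]⟩
  rw [injective_iff_map_eq_zero]
  intro x hx
  obtain ⟨y, rfl⟩ := (hπ.iterate m) x
  have hy : y ∈ RingHom.ker (π ^ (m + 1)) := by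
    rwa [RingHom.mem_ker, RingHom.coe_pow, Function.iterate_succ_apply']
  rw [show RingHom.ker (π ^ (m + 1)) = RingHom.ker (π ^ m) from (hm _ m.le_succ).symm] at hy
  rwa [RingHom.mem_ker, RingHom.coe_pow] at hy

section LeadingTerms

variable {K : Type*} [CommSemiring K] {n : ℕ} (w : Fin n → ℕ) (f : Fin n → MvPolynomial (Fin n) K)

/-- The weights defining `deg₂`. -/
noncomputable def degreeWeights : Fin n → ℕ := fun j => weightedTotalDegree w (f j)

variable {w f}

theorem MvPolynomial.IsWeightedHomogeneous.ldt_eq {p : MvPolynomial (Fin n) K} {a : ℕ}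
    (hp : IsWeightedHomogeneous w p a) : ldt w p = p := by
  rcases eq_or_ne p 0 with rfl | h
  · exact map_zero _
  · rw [ldt, hp.weightedTotalDegree_eq h, weightedHomogeneousComponent_eq_self hp]

theorem ldt_aeval_of_le {P : MvPolynomial (Fin n) K}
    (h : weightedTotalDegree (degreeWeights w f) P ≤ weightedTotalDegree w (aeval f P)) :
    ldt w (aeval f P) = aeval (fun j => ldt w (f j)) (ldt (degreeWeights w f) P) := by
  rw [ldt, ldt, le_antisymm (weightedTotalDegree_aeval_le fun j => le_rfl) h]
  exact weightedHomogeneousComponent_aeval (fun j => le_rfl) le_rfl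

end LeadingTerms

section RelIdeal

variable {K : Type*} [Field K] {n : ℕ} {w : Fin n → ℕ} {f : Fin n → MvPolynomial (Fin n) K}

theorem mem_relIdeal {P : MvPolynomial (Fin n) K} :
    P ∈ relIdeal w f ↔ aeval (fun j => ldt w (f j)) P = 0 :=
  RingHom.mem_ker

theorem relIdeal_eq_bot_of_surjective
    (h : Function.Surjective (aeval (fun j => ldt w (f j)) :
      MvPolynomial (Fin n) K →ₐ[K] MvPolynomial (Fin n) K)) :
    relIdeal w f = ⊥ :=
  (RingHom.injective_iff_ker_eq_bot _).mp
    (RingHom.injective_of_surjective_of_isNoetherianRing _ h)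

theorem ldt_mem_relIdeal {P : MvPolynomial (Fin n) K} (hP : P ∈ relIdeal w f) :
    ldt (degreeWeights w f) P ∈ relIdeal w f := by
  have hF : ∀ j, IsWeightedHomogeneous w (ldt w (f j)) (degreeWeights w f j) := fun j =>
    weightedHomogeneousComponent_isWeightedHomogeneous _ _
  have := weightedHomogeneousComponent_aeval (w := w) (fun j => (hF j).weightedTotalDegree_le)
    (le_refl (weightedTotalDegree (degreeWeights w f) P))
  rw [mem_relIdeal.mp hP, map_zero] at this
  simp_rw [weightedHomogeneousComponent_eq_self (hF _)] at this
  exact mem_relIdeal.mpr this.symm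

theorem ne_zero_of_injective_aeval
    (hf : Function.Injective (aeval f : MvPolynomial (Fin n) K →ₐ[K] MvPolynomial (Fin n) K))
    (j : Fin n) : f j ≠ 0 := fun h =>
  X_ne_zero j (hf (by rw [aeval_X, h, map_zero]))

theorem relIdeal_eq_bot_of_fin_one {w : Fin 1 → ℕ} {f : Fin 1 → MvPolynomial (Fin 1) K}
    (hf : Function.Injective (aeval f : MvPolynomial (Fin 1) K →ₐ[K] MvPolynomial (Fin 1) K)) :
    relIdeal w f = ⊥ := by
  by_cases h0 : weightedTotalDegree w (f 0) = 0
  · have hF : (fun j => ldt w (f j)) = f := funext fun j => by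
      rw [Subsingleton.elim j 0]
      exact (isWeightedHomogeneous_zero_iff_weightedTotalDegree_eq_zero.mpr h0).ldt_eq
    rw [relIdeal, hF]
    exact (RingHom.injective_iff_ker_eq_bot _).mp hf
  rw [eq_bot_iff]
  intro P hP
  by_contra hne
  set d := degreeWeights w f
  set a := weightedTotalDegree d P
  have hQ : IsWeightedHomogeneous d (ldt d P) a :=
    weightedHomogeneousComponent_isWeightedHomogeneous _ _
  have hQ₀ : ldt d P ≠ 0 := weightedHomogeneousComponent_weightedTotalDegree_ne_zero hne
  -- in one variable a homogeneous polynomial of positive weight is a monomial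
  have hmono := hQ.eq_monomial_of_unique_weight (d₀ := Finsupp.single 0 (a / d 0)) fun β hβ => by
    rw [Finsupp.weight_eq_sum, Fin.sum_univ_one, smul_eq_mul] at hβ
    refine Finsupp.ext fun i => ?_
    rw [Subsingleton.elim i 0, Finsupp.single_eq_same]
    exact (Nat.div_eq_of_eq_mul_left (Nat.pos_of_ne_zero h0) hβ.symm).symm
  have hc : coeff (Finsupp.single 0 (a / d 0)) (ldt d P) ≠ 0 := fun hc =>
    hQ₀ (by rw [hmono, hc, monomial_zero])
  have := mem_relIdeal.mp (ldt_mem_relIdeal hP)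
  rw [hmono, aeval_monomial_eq_C_mul_prod] at this
  refine mul_ne_zero (C_ne_zero.mpr hc)
    (Finset.prod_ne_zero_iff.mpr fun j _ => pow_ne_zero _ ?_) this
  exact weightedHomogeneousComponent_weightedTotalDegree_ne_zero (ne_zero_of_injective_aeval hf j)

variable (e : MvPolynomial (Fin n) K ≃ₐ[K] MvPolynomial (Fin n) K) (he : ∀ P, e P = aeval f P)
include he

theorem exists_pderiv_eq_zero_weightedTotalDegree_lt (hn : 2 ≤ n) (hI : relIdeal w f ≠ ⊥) :
    ∃ i q, q ≠ 0 ∧ pderiv i q = 0 ∧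
      weightedTotalDegree w q < weightedTotalDegree (degreeWeights w f) (e.symm q) := by
  by_contra! h
  refine hI (relIdeal_eq_bot_of_surjective ?_)
  have : Nontrivial (Fin n) := Fin.nontrivial_iff_two_le.mpr hn
  rw [← AlgHom.range_eq_top, eq_top_iff, ← adjoin_range_X, Algebra.adjoin_le_iff]
  rintro _ ⟨j, rfl⟩
  obtain ⟨i, hij⟩ := exists_ne j
  have hP : aeval f (e.symm (X j)) = X j := by rw [← he, AlgEquiv.apply_symm_apply]
  have key := ldt_aeval_of_le (P := e.symm (X j)) (by
    rw [hP]
    exact h i (X j) (X_ne_zero j) (pderiv_X_of_ne hij.symm))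
  rw [hP, (isWeightedHomogeneous_X K w j).ldt_eq] at key
  exact ⟨_, key.symm⟩

theorem exists_pderiv_ne_zero (i : Fin n) : ∃ j, pderiv i (f j) ≠ 0 := by
  by_contra! h
  have hzero : (pderiv i).conj e = 0 := derivation_ext fun j => by
    rw [Derivation.conj_apply, he, aeval_X, h j, map_zero]
    rfl
  have := congrArg (· (e.symm (X i))) hzero
  simp [Derivation.conj_apply] at this

theorem derivationComponent_mem_relIdeal
    {δ : Derivation K (MvPolynomial (Fin n) K) (MvPolynomial (Fin n) K)} {E : ℕ}
    (hδ : ∀ j, weightedTotalDegree (degreeWeights w f) (δ (X j)) ≤ degreeWeights w f j + E)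
    (hgap : ∀ a Q, IsWeightedHomogeneous (degreeWeights w f) Q a →
      weightedTotalDegree w (e (δ Q)) < a + E)
    (P : MvPolynomial (Fin n) K) :
    derivationComponent δ (degreeWeights w f) E P ∈ relIdeal w f := by
  rw [← sum_weightedHomogeneousComponent_range (w := degreeWeights w f) (p := P) le_rfl, map_sum]
  refine Ideal.sum_mem _ fun m _ => ?_
  have hm := weightedHomogeneousComponent_isWeightedHomogeneous (w := degreeWeights w f) m P
  have := weightedHomogeneousComponent_aeval (w := w) (f := f) (fun j => le_rfl)
    (hm.weightedTotalDegree_derivation_le hδ)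
  rw [mem_relIdeal, hm.derivationComponent_apply]
  refine this.symm.trans ?_
  rw [← he]
  exact weightedHomogeneousComponent_eq_zero _ _ (hgap m _ hm)

theorem exists_isLND_ne_zero_forall_mem_relIdeal (hn : 2 ≤ n) (hI : relIdeal w f ≠ ⊥) :
    ∃ D : Derivation K (MvPolynomial (Fin n) K) (MvPolynomial (Fin n) K),
      D ≠ 0 ∧ IsLND D ∧ ∀ P, D P ∈ relIdeal w f := by
  obtain ⟨i, q, hq, hqi, hlt⟩ := exists_pderiv_eq_zero_weightedTotalDegree_lt e he hn hI
  obtain ⟨j₀, hj₀⟩ := exists_pderiv_ne_zero e he i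
  set d := degreeWeights w f
  -- `N` is chosen so that `deg₂ (δ (X j₀)) > d j₀ + N * deg₁ q`, which forces `E > deg₁ (q ^ N)`
  set N := d j₀ + 1
  set δ := (q ^ N • pderiv i).conj e
  have hδ : ∀ P, e (δ P) = q ^ N * pderiv i (e P) := fun P => by
    rw [Derivation.conj_apply, AlgEquiv.apply_symm_apply, Derivation.smul_apply, smul_eq_mul]
  have hlow : d j₀ + N * weightedTotalDegree w q < weightedTotalDegree d (δ (X j₀)) := by
    have hδX : δ (X j₀) = e.symm q ^ N * e.symm (pderiv i (f j₀)) := by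
      rw [← map_pow, ← map_mul, ← e.symm_apply_apply (δ (X j₀)), hδ, he, aeval_X]
    have hq' : e.symm q ≠ 0 := by simpa using hq
    have hj₀' : e.symm (pderiv i (f j₀)) ≠ 0 := by simpa using hj₀
    rw [hδX, weightedTotalDegree_mul (pow_ne_zero _ hq') hj₀', weightedTotalDegree_pow hq']
    have := Nat.mul_le_mul_left N (Nat.succ_le_of_lt hlt)
    rw [Nat.mul_succ] at this
    omega
  obtain ⟨E, hNE, hδE, hD⟩ := exists_derivationComponent_ne_zero δ hlow
  refine ⟨derivationComponent δ d E, hD, ?_, derivationComponent_mem_relIdeal e he hδE ?_⟩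
  · refine ((isLND_pderiv i).smul_of_apply_eq_zero ?_ |>.conj e).derivationComponent hδE
    rw [Derivation.leibniz_pow, hqi, smul_zero, smul_zero]
  · intro a Q hQ
    rw [hδ]
    calc weightedTotalDegree w (q ^ N * pderiv i (e Q))
        ≤ N * weightedTotalDegree w q + weightedTotalDegree w (e Q) :=
          weightedTotalDegree_mul_le.trans (add_le_add (weightedTotalDegree_pow_le le_rfl N)
            (weightedTotalDegree_pderiv_le i))
      _ ≤ N * weightedTotalDegree w q + a := by
          rw [he]
          exact add_le_add_right (hQ.weightedTotalDegree_aeval_le fun j => le_rfl) _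
      _ < a + E := by omega

end RelIdeal

theorem stmt0_general {K : Type*} [Field K] [CharZero K]
    {n : ℕ} (hn : 0 < n) (w : Fin n → ℕ)
    (f : Fin n → MvPolynomial (Fin n) K)
    (hf : Function.Bijective
      ⇑(aeval f : MvPolynomial (Fin n) K →ₐ[K] MvPolynomial (Fin n) K)) :
    ∃ D : Derivation K (MvPolynomial (Fin n) K) (MvPolynomial (Fin n) K),
      D ≠ 0 ∧ IsLND D ∧ (∀ P ∈ relIdeal w f, D P ∈ relIdeal w f) ∧
      ∀ R : MvPolynomial (Fin n) K, relIdeal w f = Ideal.span {R} → D R = 0 := by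
  suffices h : ∃ D : Derivation K (MvPolynomial (Fin n) K) (MvPolynomial (Fin n) K),
      D ≠ 0 ∧ IsLND D ∧ ∀ P ∈ relIdeal w f, D P ∈ relIdeal w f by
    obtain ⟨D, hD, hl, hI⟩ := h
    refine ⟨D, hD, hl, hI, fun R hR => hl.apply_eq_zero_of_dvd ?_⟩
    rw [← Ideal.mem_span_singleton, ← hR]
    exact hI R (hR ▸ Ideal.mem_span_singleton_self R)
  by_cases hI : relIdeal w f = ⊥
  · refine ⟨pderiv ⟨0, hn⟩, fun h => ?_, isLND_pderiv _, fun P hP => ?_⟩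
    · simpa [h] using pderiv_X_self (R := K) (⟨0, hn⟩ : Fin n)
    · rw [hI, Ideal.mem_bot] at hP ⊢
      rw [hP, map_zero]
  have hn₂ : 2 ≤ n := by
    by_contra h
    obtain rfl : n = 1 := by omega
    exact hI (relIdeal_eq_bot_of_fin_one hf.injective)
  obtain ⟨D, hD, hl, hmem⟩ := exists_isLND_ne_zero_forall_mem_relIdeal
    (AlgEquiv.ofBijective _ hf) (fun _ => rfl) hn₂ hI
  exact ⟨D, hD, hl, fun P _ => hmem P⟩

/-- Theorem 1: there is a nonzero locally nilpotent derivation preserving the ideal of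
relations; moreover if the ideal is principal, generated by `R`, then `∂ R = 0`. -/
theorem stmt0 {K : Type*} [Field K] [IsAlgClosed K] [CharZero K]
    {n : ℕ} (hn : 0 < n) (w : Fin n → ℕ) (hw : ∀ i, 0 < w i)
    (f : Fin n → MvPolynomial (Fin n) K)
    (hf : Function.Bijective
      ⇑(aeval f : MvPolynomial (Fin n) K →ₐ[K] MvPolynomial (Fin n) K)) :
    ∃ D : Derivation K (MvPolynomial (Fin n) K) (MvPolynomial (Fin n) K),
      D ≠ 0 ∧ IsLND D ∧ (∀ P ∈ relIdeal w f, D P ∈ relIdeal w f) ∧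
      ∀ R : MvPolynomial (Fin n) K, relIdeal w f = Ideal.span {R} → D R = 0 :=
  stmt0_general hn w f hf
end

section
/- Let Φ=(f_1,…,f_n) be a polynomial automorphism of K^n with inverse Φ^{-1}=(g_1,…,g_n) and Jacobian determinant λ ∈ K*. For i = 1,…,n define δ_i(P) = λ^{-1}·∂P/∂x_i and Δ_i(P) = j(g_1,…,g_{i-1},P,g_{i+1},…,g_n). Then for every index i and every polynomial P: Δ_i(P∘Φ^{-1}) = δ_i(P)∘Φ^{-1} and Δ_i(P)∘Φ = δ_i(P∘Φ); moreover every derivation Δ_i is locally nilpotent. -/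
/-!
By the chain rule, the `i`-th row of the Jacobian matrix of `(g₁, …, P∘Φ⁻¹, …, gₙ)` is the
combination of the rows of `J(Φ⁻¹)` with coefficients `(∂P/∂xₘ)∘Φ⁻¹`, so
`Δᵢ(P∘Φ⁻¹) = (∂P/∂xᵢ)∘Φ⁻¹ · j(Φ⁻¹)`; and `j(Φ⁻¹) = λ⁻¹` by the chain rule for `Φ∘Φ⁻¹ = id`.
Thus `Δᵢ` is conjugate, via `Φ⁻¹`, to `λ⁻¹ ∂/∂xᵢ`, which is locally nilpotent because
`∂/∂xᵢ` lowers the exponent of `xᵢ` in every monomial.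
-/

open MvPolynomial

/-- The Jacobian determinant of an `n`-tuple of polynomials in `n` variables. -/
noncomputable def jacDet {K : Type*} [CommRing K] {n : ℕ}
    (P : Fin n → MvPolynomial (Fin n) K) : MvPolynomial (Fin n) K :=
  Matrix.det (Matrix.of fun i j => pderiv j (P i))

namespace MvPolynomial

variable {R : Type*} [CommSemiring R]

theorem aeval_aeval_eq_self {σ τ : Type*} {f : σ → MvPolynomial τ R}
    {g : τ → MvPolynomial σ R} (h : ∀ i, aeval f (g i) = X i) (P : MvPolynomial τ R) :
    aeval f (aeval g P) = P := by
  rw [← AlgHom.comp_apply, comp_aeval, show (fun i => aeval f (g i)) = X from _root_.funext h,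
    aeval_X_left, AlgHom.id_apply]

theorem pderiv_aeval {σ τ : Type*} [Fintype τ] (g : τ → MvPolynomial σ R) (j : σ)
    (P : MvPolynomial τ R) :
    pderiv j (aeval g P) = ∑ m, aeval g (pderiv m P) * pderiv j (g m) := by
  classical
  induction P using MvPolynomial.induction_on with
  | C a => simp
  | add p q hp hq => simp only [map_add, hp, hq, add_mul, Finset.sum_add_distrib]
  | mul_X p m hp =>
    rw [map_mul, aeval_X, pderiv_mul, hp, Finset.sum_mul]
    simp only [pderiv_mul, pderiv_X, Pi.single_apply, map_add, map_mul, aeval_X, add_mul,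
      Finset.sum_add_distrib, mul_ite, mul_one, mul_zero, apply_ite (aeval g), map_zero, ite_mul,
      zero_mul, Finset.sum_ite_eq, Finset.mem_univ, if_true, mul_right_comm _ (g m)]

theorem coeff_pderiv_iterate {σ : Type*} (i : σ) (k : ℕ) (p : MvPolynomial σ R)
    (m : σ →₀ ℕ) :
    coeff m ((pderiv i)^[k] p) =
      coeff (m + Finsupp.single i k) p * ((m i + k).descFactorial k : ℕ) := by
  induction k generalizing m with
  | zero => simp
  | succ k ih =>
    have hexp : m + Finsupp.single i 1 + Finsupp.single i k = m + Finsupp.single i (k + 1) := by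
      rw [add_assoc, ← Finsupp.single_add, add_comm 1 k]
    have hfac :
        (m i + 1 + k).descFactorial k * (m i + 1) = (m i + (k + 1)).descFactorial (k + 1) := by
      rw [Nat.descFactorial_succ, show m i + (k + 1) - k = m i + 1 by omega, add_right_comm,
        add_assoc, mul_comm]
    rw [Function.iterate_succ_apply', coeff_pderiv, ih, hexp, Finsupp.add_apply,
      Finsupp.single_eq_same, mul_assoc, ← hfac]
    push_cast
    rfl

theorem pderiv_iterate_eq_zero {σ : Type*} (i : σ) {k : ℕ} {p : MvPolynomial σ R}
    (hk : p.totalDegree < k) : (pderiv i)^[k] p = 0 := by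
  ext m
  rw [coeff_pderiv_iterate, coeff_zero, coeff_eq_zero_of_totalDegree_lt, zero_mul]
  rw [← Finsupp.degree_apply, map_add, Finsupp.degree_single]
  omega

theorem exists_iterate_C_mul_pderiv_eq_zero {σ : Type*} (c : R) (i : σ)
    (p : MvPolynomial σ R) : ∃ k, (fun q => C c * pderiv i q)^[k] p = 0 := by
  have hcomm : Function.Commute (C c * ·) (pderiv i) := fun q => pderiv_C_mul.symm
  refine ⟨p.totalDegree + 1, ?_⟩
  change ((C c * ·) ∘ pderiv i)^[_] p = 0
  rw [hcomm.comp_iterate, Function.comp_apply, pderiv_iterate_eq_zero i (lt_add_one _),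
    Function.iterate_fixed (mul_zero _)]

noncomputable def jacobian {ι σ : Type*} (P : ι → MvPolynomial σ R) :
    Matrix ι σ (MvPolynomial σ R) :=
  Matrix.of fun i j => pderiv j (P i)

theorem jacobian_aeval {ι σ τ : Type*} [Fintype τ] (f : τ → MvPolynomial σ R)
    (g : ι → MvPolynomial τ R) :
    jacobian (fun k => aeval f (g k)) = (jacobian g).map (aeval f) * jacobian f := by
  ext k j
  simp only [jacobian, Matrix.mul_apply, Matrix.of_apply, Matrix.map_apply, pderiv_aeval]

theorem jacobian_X {σ : Type*} [DecidableEq σ] :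
    jacobian (X : σ → MvPolynomial σ R) = 1 := by
  ext k j
  simp [jacobian, pderiv_X, Pi.single_apply, Matrix.one_apply]

theorem jacobian_update {ι σ : Type*} [DecidableEq ι] (g : ι → MvPolynomial σ R) (i : ι)
    (Q : MvPolynomial σ R) :
    jacobian (Function.update g i Q) = (jacobian g).updateRow i fun j => pderiv j Q := by
  ext k j
  rcases eq_or_ne k i with rfl | h
  · simp [jacobian]
  · simp [jacobian, h]

end MvPolynomial

section JacobianDeterminant

variable {R : Type*} [CommRing R] {n : ℕ}

theorem jacDet_eq_det_jacobian (P : Fin n → MvPolynomial (Fin n) R) :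
    jacDet P = (jacobian P).det :=
  rfl

theorem jacDet_X : jacDet (X : Fin n → MvPolynomial (Fin n) R) = 1 := by
  rw [jacDet_eq_det_jacobian, jacobian_X, Matrix.det_one]

theorem jacDet_aeval (f g : Fin n → MvPolynomial (Fin n) R) :
    jacDet (fun k => aeval f (g k)) = aeval f (jacDet g) * jacDet f := by
  simp only [jacDet_eq_det_jacobian, jacobian_aeval, Matrix.det_mul, AlgHom.map_det,
    AlgHom.mapMatrix_apply]

theorem jacDet_update_aeval (g : Fin n → MvPolynomial (Fin n) R) (i : Fin n)
    (P : MvPolynomial (Fin n) R) :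
    jacDet (Function.update g i (aeval g P)) = aeval g (pderiv i P) * jacDet g := by
  have hrow : (fun j => pderiv j (aeval g P)) = ∑ m, aeval g (pderiv m P) • jacobian g m := by
    ext j
    simp only [pderiv_aeval, jacobian, Finset.sum_apply, Pi.smul_apply, Matrix.of_apply,
      smul_eq_mul]
  rw [jacDet_eq_det_jacobian, jacobian_update, hrow, Matrix.det_updateRow_sum]
  rfl

theorem jacDet_eq_C_inv {K : Type*} [Field K] {f g : Fin n → MvPolynomial (Fin n) K}
    (hfg : ∀ i, aeval f (g i) = X i) (hgf : ∀ i, aeval g (f i) = X i) {lam : K}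
    (hlam : lam ≠ 0) (hjac : jacDet f = C lam) : jacDet g = C lam⁻¹ := by
  have hcomp : aeval f (jacDet g) * C lam = 1 := by
    rw [← hjac, ← jacDet_aeval, show (fun k => aeval f (g k)) = X from funext hfg, jacDet_X]
  have hinv : jacDet g * C lam = 1 := by
    have := congrArg (aeval g) hcomp
    rwa [map_mul, aeval_aeval_eq_self hgf, aeval_C, algebraMap_eq, map_one] at this
  exact left_inv_eq_right_inv hinv (by rw [← C_mul, mul_inv_cancel₀ hlam, C_1])

end JacobianDeterminant

theorem stmt11_general {K : Type*} [Field K]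
    {n : ℕ} (f g : Fin n → MvPolynomial (Fin n) K)
    (hfg : ∀ i, aeval f (g i) = X i) (hgf : ∀ i, aeval g (f i) = X i)
    (lam : K) (hlam : lam ≠ 0) (hjac : jacDet f = C lam) :
    (∀ (i : Fin n) (P : MvPolynomial (Fin n) K),
        jacDet (Function.update g i (aeval g P)) = aeval g (C lam⁻¹ * pderiv i P)) ∧
    (∀ (i : Fin n) (P : MvPolynomial (Fin n) K),
        aeval f (jacDet (Function.update g i P)) = C lam⁻¹ * pderiv i (aeval f P)) ∧
    (∀ (i : Fin n) (P : MvPolynomial (Fin n) K),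
        ∃ k : ℕ, (fun Q => jacDet (Function.update g i Q))^[k] P = 0) := by
  have key : ∀ i P,
      jacDet (Function.update g i (aeval g P)) = aeval g (C lam⁻¹ * pderiv i P) := by
    intro i P
    rw [jacDet_update_aeval, jacDet_eq_C_inv hfg hgf hlam hjac, map_mul, aeval_C,
      algebraMap_eq, mul_comm]
  refine ⟨key, fun i P => ?_, fun i P => ?_⟩
  · simpa only [aeval_aeval_eq_self hgf, aeval_aeval_eq_self hfg] using
      congrArg (aeval f) (key i (aeval f P))
  · have hconj : Function.Semiconj (aeval g) (fun Q => C lam⁻¹ * pderiv i Q)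
        (fun Q => jacDet (Function.update g i Q)) := fun Q => (key i Q).symm
    obtain ⟨k, hk⟩ := exists_iterate_C_mul_pderiv_eq_zero lam⁻¹ i (aeval f P)
    refine ⟨k, ?_⟩
    rw [← aeval_aeval_eq_self hgf P, ← (hconj.iterate_right k).eq, hk, map_zero]

/-- Lemma: with `δᵢ(P) = λ⁻¹ ∂P/∂xᵢ` and `Δᵢ(P) = j(g₁,…,g_{i-1},P,g_{i+1},…,gₙ)`, one
has `Δᵢ(P∘Φ⁻¹) = δᵢ(P)∘Φ⁻¹` and `Δᵢ(P)∘Φ = δᵢ(P∘Φ)`; moreover every `Δᵢ` is locally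
nilpotent. -/
theorem stmt11 {K : Type*} [Field K] [IsAlgClosed K] [CharZero K]
    {n : ℕ} (f g : Fin n → MvPolynomial (Fin n) K)
    (hfg : ∀ i, aeval f (g i) = X i) (hgf : ∀ i, aeval g (f i) = X i)
    (lam : K) (hlam : lam ≠ 0) (hjac : jacDet f = C lam) :
    (∀ (i : Fin n) (P : MvPolynomial (Fin n) K),
        jacDet (Function.update g i (aeval g P)) = aeval g (C lam⁻¹ * pderiv i P)) ∧
    (∀ (i : Fin n) (P : MvPolynomial (Fin n) K),
        aeval f (jacDet (Function.update g i P)) = C lam⁻¹ * pderiv i (aeval f P)) ∧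
    (∀ (i : Fin n) (P : MvPolynomial (Fin n) K),
        ∃ k : ℕ, (fun Q => jacDet (Function.update g i Q))^[k] P = 0) :=
  stmt11_general f g hfg hgf lam hlam hjac
end

section
/- Let deg_1 be a p.w.h. degree on K[x_1,…,x_n] and let R be a deg_1-homogeneous irreducible nonconstant polynomial. If there exists a nonzero locally nilpotent K-derivation D of K[x_1,…,x_n] with D(R) = 0, then the quotient ring A = K[x_1,…,x_n]/(R) admits a nonzero weighted homogeneous locally nilpotent K-derivation (homogeneous with respect to the grading induced by deg_1 on A). -/
open MvPolynomial

/-! Grade `K[x₁,…,xₙ]` by `ℤ`-valued weights and split `D` into weighted homogeneous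
components `D = ∑ D_r`. The lowest nonzero component `Δ = D_r` is again locally nilpotent,
because for homogeneous `p` of degree `m` the lowest-degree part of `D^k p` is `Δ^k p`, in degree
`m + k r`; it also kills the homogeneous polynomial `R`. By Krull's intersection theorem there is
a largest `k` with `Δ = R^k • E`. Cancelling `R^k` in the domain `K[x₁,…,xₙ]` shows that `E` is
homogeneous, locally nilpotent and kills `R`, and by maximality `E` does not map `K[x₁,…,xₙ]`
into `(R)`. So `E` preserves `(R)` and descends to a nonzero homogeneous locally nilpotent
derivation of `K[x₁,…,xₙ]/(R)`. -/

theorem Finsupp.weight_natCast {σ : Type*} (w : σ → ℕ) (d : σ →₀ ℕ) :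
    d.weight (fun i => (w i : ℤ)) = d.weight w := by
  simp [Finsupp.weight_apply, Finsupp.sum]

namespace MvPolynomial

section IntWeights

variable {K σ : Type*} [CommRing K] {w : σ → ℤ}

attribute [local instance] weightedGradedAlgebra in
theorem weightedHomogeneousComponent_mul_of_isWeightedHomogeneous {a : MvPolynomial σ K}
    {i : ℤ} (ha : a.IsWeightedHomogeneous w i) (b : MvPolynomial σ K) (j : ℤ) :
    weightedHomogeneousComponent w (i + j) (a * b) = a * weightedHomogeneousComponent w j b := by
  classical
  have := DirectSum.coe_decompose_mul_add_of_left_mem (weightedHomogeneousSubmodule K w)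
    (j := j) (b := b) ((mem_weightedHomogeneousSubmodule _ _ _ _).2 ha)
  rwa [DirectSum.decompose, Equiv.coe_fn_mk, weightedDecomposition.decompose'_apply,
    weightedDecomposition.decompose'_apply] at this

theorem IsWeightedHomogeneous.of_mul_left [IsDomain K] {a b : MvPolynomial σ K} {i j : ℤ}
    (ha : a.IsWeightedHomogeneous w i) (ha0 : a ≠ 0)
    (hab : (a * b).IsWeightedHomogeneous w (i + j)) : b.IsWeightedHomogeneous w j := by
  have h := weightedHomogeneousComponent_mul_of_isWeightedHomogeneous ha b j
  rw [weightedHomogeneousComponent_eq_self hab] at h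
  rw [mul_left_cancel₀ ha0 h]
  exact weightedHomogeneousComponent_isWeightedHomogeneous _ _

theorem le_weight_of_mem_support {q : MvPolynomial σ K} {b : ℤ}
    (hq : ∀ z < b, weightedHomogeneousComponent w z q = 0) {d : σ →₀ ℕ}
    (hd : d ∈ q.support) : b ≤ d.weight w := by
  classical
  by_contra! h
  have := coeff_weightedHomogeneousComponent (w := w) (d.weight w) q d
  rw [hq _ h, if_pos rfl, coeff_zero] at this
  exact mem_support_iff.mp hd this.symm

end IntWeights

section NatWeights

variable {K σ : Type*} [CommRing K] {w : σ → ℕ} {p : MvPolynomial σ K}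

theorem isWeightedHomogeneous_natCast_iff {m : ℕ} :
    p.IsWeightedHomogeneous (fun i => (w i : ℤ)) m ↔ p.IsWeightedHomogeneous w m := by
  simp only [IsWeightedHomogeneous, Finsupp.weight_natCast, Nat.cast_inj]

theorem IsWeightedHomogeneous.nonneg_of_natCast {z : ℤ}
    (hp : p.IsWeightedHomogeneous (fun i => (w i : ℤ)) z) (hp0 : p ≠ 0) : 0 ≤ z := by
  obtain ⟨d, hd⟩ := ne_zero_iff.mp hp0
  rw [← hp hd, Finsupp.weight_natCast]
  exact Int.natCast_nonneg _

end NatWeights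

end MvPolynomial

theorem isLND_of_forall_monomial {K σ : Type*} [CommRing K]
    {Δ : Derivation K (MvPolynomial σ K) (MvPolynomial σ K)}
    (h : ∀ s c, ∃ k, (⇑Δ)^[k] (monomial s c) = 0) : IsLND Δ := by
  intro p
  induction p using MvPolynomial.induction_on' with
  | monomial s c => exact h s c
  | add p q hp hq =>
    obtain ⟨k, hk⟩ := hp
    obtain ⟨l, hl⟩ := hq
    refine ⟨k + l, ?_⟩
    rw [iterate_map_add, Function.iterate_add_apply _ k l q, hl, iterate_map_zero, add_zero,
      add_comm, Function.iterate_add_apply, hk, iterate_map_zero]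

section Algebra

variable {K A : Type*} [CommRing K] [CommRing A] [Algebra K A] {Δ E : Derivation K A A} {a : A}

theorem Derivation.iterate_smul_apply (hE : E a = 0) (k : ℕ) (x : A) :
    (⇑(a • E))^[k] x = a ^ k * (⇑E)^[k] x := by
  induction k with
  | zero => simp
  | succ k ih =>
    rw [Function.iterate_succ_apply', Function.iterate_succ_apply', ih, Derivation.smul_apply,
      Derivation.leibniz, Derivation.leibniz_pow, hE, smul_zero, smul_zero, smul_zero, add_zero,
      smul_smul, smul_eq_mul, pow_succ']

theorem IsLND.of_smul_eq [IsDomain A] (hΔ : IsLND Δ) (heq : Δ = a • E) (ha : a ≠ 0)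
    (hE : E a = 0) : IsLND E := fun x => by
  obtain ⟨k, hk⟩ := hΔ x
  rw [heq, Derivation.iterate_smul_apply hE] at hk
  exact ⟨k, (mul_eq_zero.mp hk).resolve_left (pow_ne_zero k ha)⟩

theorem Derivation.map_mem_span_singleton {x : A} (ha : Δ a = 0) (hx : x ∈ Ideal.span {a}) :
    Δ x ∈ Ideal.span {a} := by
  obtain ⟨c, rfl⟩ := Ideal.mem_span_singleton'.mp hx
  rw [Derivation.leibniz, ha, smul_zero, zero_add, smul_eq_mul]
  exact Ideal.mul_mem_right _ _ (Ideal.mem_span_singleton_self a)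

theorem IsLND.liftOfSurjective {M F : Type*} [CommRing M] [Algebra K M] [FunLike F A M]
    [AlgHomClass F K A M] {f : F} (hf : Function.Surjective f)
    (hd : ∀ x, f x = 0 → f (Δ x) = 0) (h : IsLND Δ) : IsLND (Δ.liftOfSurjective hf hd) := by
  intro y
  obtain ⟨x, rfl⟩ := hf y
  obtain ⟨k, hk⟩ := h x
  have hsemi : Function.Semiconj f Δ (Δ.liftOfSurjective hf hd) := fun x =>
    (Derivation.liftOfSurjective_apply hf hd x).symm
  exact ⟨k, by rw [← hsemi.iterate_right k, hk, map_zero]⟩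

end Algebra

namespace Derivation

section Components

variable {K σ : Type*} [CommRing K]

variable (w : σ → ℤ) in
def IsWeightedHomogeneous (Δ : Derivation K (MvPolynomial σ K) (MvPolynomial σ K)) (r : ℤ) :
    Prop :=
  ∀ ⦃p : MvPolynomial σ K⦄ ⦃m : ℤ⦄, p.IsWeightedHomogeneous w m →
    (Δ p).IsWeightedHomogeneous w (m + r)

variable (w : σ → ℤ) in
noncomputable def weightedComponent (D : Derivation K (MvPolynomial σ K) (MvPolynomial σ K))
    (r : ℤ) : Derivation K (MvPolynomial σ K) (MvPolynomial σ K) :=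
  mkDerivation K fun i => weightedHomogeneousComponent w (w i + r) (D (X i))

variable {w : σ → ℤ} (D : Derivation K (MvPolynomial σ K) (MvPolynomial σ K))

theorem weightedComponent_apply (r : ℤ) {p : MvPolynomial σ K} {m : ℤ}
    (hp : p.IsWeightedHomogeneous w m) :
    D.weightedComponent w r p = weightedHomogeneousComponent w (m + r) (D p) := by
  classical
  have hD : ⇑D = mkDerivation K fun i => D (X i) := congrArg _ (derivation_ext (by simp))
  rw [hD, p.as_sum, map_sum, map_sum, map_sum]
  refine Finset.sum_congr rfl fun s hs => ?_
  rw [weightedComponent, mkDerivation_monomial, mkDerivation_monomial, LinearMap.map_smul,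
    Finsupp.sum, Finsupp.sum, map_sum]
  congr 1
  refine Finset.sum_congr rfl fun i hi => ?_
  have hwt : (s - Finsupp.single i 1).weight w + (w i + r) = m + r := by
    rw [← add_assoc, Finsupp.weight_sub_single_add (Finsupp.mem_support_iff.mp hi),
      hp (mem_support_iff.mp hs)]
  rw [smul_eq_mul, smul_eq_mul, ← hwt, weightedHomogeneousComponent_mul_of_isWeightedHomogeneous
    (isWeightedHomogeneous_monomial _ _ _ rfl)]

theorem isWeightedHomogeneous_weightedComponent (r : ℤ) :
    (D.weightedComponent w r).IsWeightedHomogeneous w r := fun p m hp => by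
  rw [weightedComponent_apply D r hp]
  exact weightedHomogeneousComponent_isWeightedHomogeneous _ _

theorem exists_weightedComponent_ne_zero_forall_lt [Finite σ] (hD : D ≠ 0) :
    ∃ r, D.weightedComponent w r ≠ 0 ∧ ∀ r' < r, D.weightedComponent w r' = 0 := by
  set S := {r | D.weightedComponent w r ≠ 0}
  have hS : S ⊆ ⋃ i, (· - w i) ''
      Function.support fun z => weightedHomogeneousComponent w z (D (X i)) := by
    intro r hr
    obtain ⟨i, hi⟩ : ∃ i, D.weightedComponent w r (X i) ≠ 0 := by
      by_contra! h
      exact hr (derivation_ext (by simpa using h))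
    rw [weightedComponent, mkDerivation_X] at hi
    exact Set.mem_iUnion.2 ⟨i, _, hi, by simp⟩
  have hSne : S.Nonempty := by
    obtain ⟨i, hi⟩ : ∃ i, D (X i) ≠ 0 := by
      by_contra! h
      exact hD (derivation_ext (by simpa using h))
    obtain ⟨z, hz⟩ : ∃ z, weightedHomogeneousComponent w z (D (X i)) ≠ 0 := by
      by_contra! h
      exact hi (by rw [← sum_weightedHomogeneousComponent w (D (X i))]; simp [h])
    refine ⟨z - w i, fun h => hz ?_⟩
    simpa [weightedComponent] using congrArg (· (X i)) h
  have hSfin : S.Finite :=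
    (Set.finite_iUnion fun i => (weightedHomogeneousComponent_finsupp _).image _).subset hS
  obtain ⟨r, hr, hmin⟩ := Set.exists_min_image S id hSfin hSne
  exact ⟨r, hr, fun r' hr' => by_contra fun h => (hmin r' h).not_gt hr'⟩

variable {D} {r : ℤ}

theorem weightedHomogeneousComponent_map_eq_zero (hlow : ∀ r' < r, D.weightedComponent w r' = 0)
    {q : MvPolynomial σ K} {b : ℤ} (hq : ∀ z < b, weightedHomogeneousComponent w z q = 0) :
    ∀ z < b + r, weightedHomogeneousComponent w z (D q) = 0 := by
  intro z hz
  rw [q.as_sum, map_sum, map_sum]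
  refine Finset.sum_eq_zero fun d hd => ?_
  have hdz := le_weight_of_mem_support hq hd
  rw [← add_sub_cancel (d.weight w) z, ← weightedComponent_apply D _
    (isWeightedHomogeneous_monomial _ _ _ rfl), hlow _ (by omega), zero_apply]

theorem weightedHomogeneousComponent_map_eq_weightedComponent
    (hlow : ∀ r' < r, D.weightedComponent w r' = 0) {q : MvPolynomial σ K} {b : ℤ}
    (hq : ∀ z < b, weightedHomogeneousComponent w z q = 0) :
    weightedHomogeneousComponent w (b + r) (D q) =
      D.weightedComponent w r (weightedHomogeneousComponent w b q) := by
  set q₀ := weightedHomogeneousComponent w b q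
  have hq₀ : q₀.IsWeightedHomogeneous w b :=
    weightedHomogeneousComponent_isWeightedHomogeneous b q
  have hrest : ∀ z < b + 1, weightedHomogeneousComponent w z (q - q₀) = 0 := by
    intro z hz
    rcases (Int.lt_add_one_iff.mp hz).lt_or_eq with h | rfl
    · rw [map_sub, hq z h, hq₀.weightedHomogeneousComponent_ne z h.ne, sub_zero]
    · rw [map_sub, weightedHomogeneousComponent_eq_self hq₀, sub_self]
  rw [← sub_add_cancel q q₀, map_add, map_add,
    weightedHomogeneousComponent_map_eq_zero hlow hrest _ (by omega), zero_add,
    weightedComponent_apply D r hq₀]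

theorem weightedHomogeneousComponent_iterate (hlow : ∀ r' < r, D.weightedComponent w r' = 0)
    {p : MvPolynomial σ K} {m : ℤ} (hp : p.IsWeightedHomogeneous w m) (k : ℕ) :
    (∀ z < m + k * r, weightedHomogeneousComponent w z ((⇑D)^[k] p) = 0) ∧
      weightedHomogeneousComponent w (m + k * r) ((⇑D)^[k] p) =
        (⇑(D.weightedComponent w r))^[k] p := by
  induction k with
  | zero =>
    simp only [Nat.cast_zero, zero_mul, add_zero, Function.iterate_zero, id_eq]
    exact ⟨fun z hz => hp.weightedHomogeneousComponent_ne z hz.ne,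
      weightedHomogeneousComponent_eq_self hp⟩
  | succ k ih =>
    rw [Function.iterate_succ_apply', Function.iterate_succ_apply', Nat.cast_succ, add_one_mul,
      ← add_assoc]
    exact ⟨weightedHomogeneousComponent_map_eq_zero hlow ih.1,
      by rw [weightedHomogeneousComponent_map_eq_weightedComponent hlow ih.1, ih.2]⟩

theorem isLND_weightedComponent (hlow : ∀ r' < r, D.weightedComponent w r' = 0)
    (hD : IsLND D) : IsLND (D.weightedComponent w r) := by
  refine isLND_of_forall_monomial fun s c => ?_
  obtain ⟨k, hk⟩ := hD (monomial s c)
  refine ⟨k, ?_⟩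
  rw [← (weightedHomogeneousComponent_iterate hlow
    (isWeightedHomogeneous_monomial w s c rfl) k).2, hk, map_zero]

end Components

section Divisibility

variable {K σ : Type*} [CommRing K] {w : σ → ℤ}
  {Δ E : Derivation K (MvPolynomial σ K) (MvPolynomial σ K)} {R : MvPolynomial σ K}

theorem exists_eq_smul_of_forall_dvd (h : ∀ i, R ∣ Δ (X i)) : ∃ E, Δ = R • E := by
  choose g hg using h
  exact ⟨mkDerivation K g,
    derivation_ext fun i => by rw [hg i, smul_apply, mkDerivation_X, smul_eq_mul]⟩

theorem IsWeightedHomogeneous.of_smul_eq [IsDomain K] {r i : ℤ}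
    (hΔ : Δ.IsWeightedHomogeneous w r) (heq : Δ = R • E) (hR : R.IsWeightedHomogeneous w i)
    (hR0 : R ≠ 0) : E.IsWeightedHomogeneous w (r - i) := fun p m hp =>
  hR.of_mul_left hR0 <| by
    rw [← smul_eq_mul, ← smul_apply, ← heq, show i + (m + (r - i)) = m + r by ring]
    exact hΔ hp

theorem exists_eq_pow_smul_not_dvd [IsDomain K] [IsNoetherianRing K] [Finite σ]
    (hΔ : Δ ≠ 0) (hR : ¬IsUnit R) :
    ∃ (k : ℕ) (E : Derivation K (MvPolynomial σ K) (MvPolynomial σ K)),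
      Δ = R ^ k • E ∧ ∃ i, ¬R ∣ E (X i) := by
  by_contra! h
  have hpow : ∀ k : ℕ, ∃ E, Δ = R ^ k • E := by
    intro k
    induction k with
    | zero => exact ⟨Δ, (one_smul _ _).symm⟩
    | succ k ih =>
      obtain ⟨E, hE⟩ := ih
      obtain ⟨F, hF⟩ := exists_eq_smul_of_forall_dvd (h k E hE)
      exact ⟨F, by rw [hE, hF, pow_succ, mul_smul]⟩
  refine hΔ (derivation_ext fun i => ?_)
  have hmem : Δ (X i) ∈ ⨅ k : ℕ, Ideal.span {R} ^ k := Ideal.mem_iInf.2 fun k => by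
    obtain ⟨E, hE⟩ := hpow k
    rw [Ideal.span_singleton_pow, Ideal.mem_span_singleton, hE, smul_apply, smul_eq_mul]
    exact dvd_mul_right _ _
  rwa [Ideal.iInf_pow_eq_bot_of_isDomain (I := Ideal.span {R})
    (by rwa [Ne, Ideal.span_singleton_eq_top]), Ideal.mem_bot] at hmem

end Divisibility

end Derivation

open Derivation in
theorem exists_isWeightedHomogeneous_isLND_not_dvd {K σ : Type*} [CommRing K] [IsDomain K]
    [IsNoetherianRing K] [Finite σ] {w : σ → ℤ} {R : MvPolynomial σ K} {m₀ : ℤ}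
    (hR : R.IsWeightedHomogeneous w m₀) (hR0 : R ≠ 0) (hRu : ¬IsUnit R)
    {D : Derivation K (MvPolynomial σ K) (MvPolynomial σ K)}
    (hD0 : D ≠ 0) (hDl : IsLND D) (hDR : D R = 0) :
    ∃ (E : Derivation K (MvPolynomial σ K) (MvPolynomial σ K)) (r : ℤ),
      E.IsWeightedHomogeneous w r ∧ IsLND E ∧ E R = 0 ∧ ∃ i, ¬R ∣ E (X i) := by
  obtain ⟨r, hr0, hlow⟩ := D.exists_weightedComponent_ne_zero_forall_lt (w := w) hD0
  obtain ⟨k, E, hE, i, hi⟩ := exists_eq_pow_smul_not_dvd hr0 hRu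
  have hRk : R ^ k ≠ 0 := pow_ne_zero k hR0
  have hER : E R = 0 := by
    have hDrR := weightedComponent_apply D r hR
    rw [hDR, map_zero, hE, Derivation.smul_apply, smul_eq_mul] at hDrR
    exact (mul_eq_zero.mp hDrR).resolve_left hRk
  have hERk : E (R ^ k) = 0 := by rw [leibniz_pow, hER, smul_zero, smul_zero]
  exact ⟨E, _, (D.isWeightedHomogeneous_weightedComponent r).of_smul_eq hE (hR.pow k) hRk,
    (isLND_weightedComponent hlow hDl).of_smul_eq hE hRk hERk, hER, i, hi⟩

theorem stmt17_general {K : Type*} [Field K]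
    {n : ℕ} (w : Fin n → ℕ)
    (R : MvPolynomial (Fin n) K)
    (m₀ : ℕ) (hhom : R.IsWeightedHomogeneous w m₀) (hnc : R ∉ Set.range (C : K → MvPolynomial (Fin n) K))
    (D : Derivation K (MvPolynomial (Fin n) K) (MvPolynomial (Fin n) K))
    (hD0 : D ≠ 0) (hDl : IsLND D) (hDR : D R = 0) :
    ∃ D' : Derivation K (MvPolynomial (Fin n) K ⧸ Ideal.span {R})
        (MvPolynomial (Fin n) K ⧸ Ideal.span {R}),
      D' ≠ 0 ∧ IsLND D' ∧
      ∃ r : ℤ, ∀ (m : ℕ) (p : MvPolynomial (Fin n) K), p.IsWeightedHomogeneous w m →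
        D' (Ideal.Quotient.mk (Ideal.span {R}) p) = 0 ∨
        (0 ≤ (m : ℤ) + r ∧ ∃ q : MvPolynomial (Fin n) K,
          q.IsWeightedHomogeneous w ((m : ℤ) + r).toNat ∧
          D' (Ideal.Quotient.mk (Ideal.span {R}) p) = Ideal.Quotient.mk (Ideal.span {R}) q) := by
  have hR0 : R ≠ 0 := fun h => hnc ⟨0, by rw [h, C_0]⟩
  have hRu : ¬IsUnit R := fun h => hnc <| by
    obtain ⟨c, -, rfl⟩ := isUnit_iff_eq_C_of_isReduced.mp h
    exact ⟨c, rfl⟩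
  obtain ⟨E, r, hEh, hEl, hER, i, hi⟩ := exists_isWeightedHomogeneous_isLND_not_dvd
    (isWeightedHomogeneous_natCast_iff.mpr hhom) hR0 hRu hD0 hDl hDR
  have hd : ∀ x, Ideal.Quotient.mkₐ K (Ideal.span {R}) x = 0 →
      Ideal.Quotient.mkₐ K (Ideal.span {R}) (E x) = 0 := by
    simpa only [Ideal.Quotient.mkₐ_eq_mk, Ideal.Quotient.eq_zero_iff_mem] using
      fun x => E.map_mem_span_singleton hER
  set D' := E.liftOfSurjective (Ideal.Quotient.mkₐ_surjective K _) hd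
  have hD' : ∀ p, D' (Ideal.Quotient.mk _ p) = Ideal.Quotient.mk _ (E p) :=
    E.liftOfSurjective_apply _ hd
  refine ⟨D', fun h => hi ?_, hEl.liftOfSurjective _ hd, r, fun m p hp => ?_⟩
  · rw [← Ideal.mem_span_singleton, ← Ideal.Quotient.eq_zero_iff_mem, ← hD', h,
      Derivation.zero_apply]
  · rw [hD']
    by_cases hEp : E p = 0
    · exact .inl (by rw [hEp, map_zero])
    · have hq := hEh (isWeightedHomogeneous_natCast_iff.mpr hp)
      have hnn := hq.nonneg_of_natCast hEp
      refine .inr ⟨hnn, E p, ?_, rfl⟩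
      rwa [← isWeightedHomogeneous_natCast_iff, Int.toNat_of_nonneg hnn]

set_option synthInstance.maxHeartbeats 1000000 in
/-- Lemma: if a `deg₁`-homogeneous irreducible nonconstant `R` is annihilated by a
nonzero locally nilpotent derivation of `K[x₁,…,xₙ]`, then the quotient
`A = K[x₁,…,xₙ]/(R)` carries a nonzero weighted homogeneous locally nilpotent
derivation (homogeneous of some degree `r` with respect to the induced grading). -/
theorem stmt17 {K : Type*} [Field K] [IsAlgClosed K] [CharZero K]
    {n : ℕ} (w : Fin n → ℕ) (hw : ∀ i, 0 < w i)
    (R : MvPolynomial (Fin n) K) (hirr : Irreducible R)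
    (m₀ : ℕ) (hhom : R.IsWeightedHomogeneous w m₀) (hnc : R ∉ Set.range (C : K → MvPolynomial (Fin n) K))
    (D : Derivation K (MvPolynomial (Fin n) K) (MvPolynomial (Fin n) K))
    (hD0 : D ≠ 0) (hDl : IsLND D) (hDR : D R = 0) :
    ∃ D' : Derivation K (MvPolynomial (Fin n) K ⧸ Ideal.span {R})
        (MvPolynomial (Fin n) K ⧸ Ideal.span {R}),
      D' ≠ 0 ∧ IsLND D' ∧
      ∃ r : ℤ, ∀ (m : ℕ) (p : MvPolynomial (Fin n) K), p.IsWeightedHomogeneous w m →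
        D' (Ideal.Quotient.mk (Ideal.span {R}) p) = 0 ∨
        (0 ≤ (m : ℤ) + r ∧ ∃ q : MvPolynomial (Fin n) K,
          q.IsWeightedHomogeneous w ((m : ℤ) + r).toNat ∧
          D' (Ideal.Quotient.mk (Ideal.span {R}) p) = Ideal.Quotient.mk (Ideal.span {R}) q) :=
  stmt17_general w R m₀ hhom hnc D hD0 hDl hDR
end
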